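/- arXiv:2001.08083 — 2 statements merged into one kernel-verified Lean document; each statement's English description precedes it below -/
import Mathlib

section
/- Let B = β·I + ((1−β)/n)·e·eᵀ with 0 < β < 1 be the full back-off AIMD matrix. Then for every nonzero z ∈ W_T, the strict contraction property ‖D(B)z‖_T < ‖z‖_T holds. -/
noncomputable def l1 {n : ℕ} (z : Fin n → ℝ) : ℝ := ∑ i, |z i|

noncomputable def normT {n T : ℕ} (z : Fin T → Fin n → ℝ) : ℝ := ⨆ ℓ, l1 (z ℓ)

/-- The action of the block matrix `D(A)` on a block vector `z ∈ ℝ^{Tn}`: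
`(D(A)z)₁ = A z₁` and `(D(A)z)_r = (1/r)·A z₁ + ((r−1)/r)·z_{r−1}` for `r = 2,…,T`
(indices here are 0-based). -/
noncomputable def DApply {n T : ℕ} (A : Matrix (Fin n) (Fin n) ℝ)
    (z : Fin T → Fin n → ℝ) : Fin T → Fin n → ℝ :=
  fun r => (1 / ((r : ℕ) + 1) : ℝ) • A.mulVec (z ⟨0, r.pos⟩)
    + (((r : ℕ) : ℝ) / ((r : ℕ) + 1)) • z ⟨(r : ℕ) - 1, lt_of_le_of_lt (Nat.pred_le _) r.isLt⟩

/-- The full back-off AIMD matrix `B = β·I + ((1−β)/n)·e·eᵀ`. -/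
noncomputable def Bmat (n : ℕ) (β : ℝ) : Matrix (Fin n) (Fin n) ℝ :=
  β • (1 : Matrix (Fin n) (Fin n) ℝ) + ((1 - β) / (n : ℝ)) • Matrix.of (fun _ _ => (1 : ℝ))

/-! On zero-sum vectors `B` acts as `β • 1`, so it shrinks every block of `z ∈ W_T` by `|β| < 1`.
Each block of `D(A)z` is a convex combination of `A z₁` and a block of `z`, with weight
`1/r > 0` on `A z₁`; hence every block of `D(B)z` is strictly shorter than `‖z‖_T`, and so is
their maximum. -/

open Matrix

section BlockNorm

variable {n T : ℕ}

lemma l1_add_le (v w : Fin n → ℝ) : l1 (v + w) ≤ l1 v + l1 w := by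
  rw [l1, l1, l1, ← Finset.sum_add_distrib]
  exact Finset.sum_le_sum fun i _ => abs_add_le _ _

lemma l1_smul (a : ℝ) (v : Fin n → ℝ) : l1 (a • v) = |a| * l1 v := by
  simp [l1, Finset.mul_sum, abs_mul]

lemma l1_le_normT (z : Fin T → Fin n → ℝ) (t : Fin T) : l1 (z t) ≤ normT z :=
  le_ciSup (f := fun t => l1 (z t)) (Set.finite_range _).bddAbove t

lemma normT_pos {z : Fin T → Fin n → ℝ} (hz : z ≠ 0) : 0 < normT z := by
  obtain ⟨t, i, hi⟩ : ∃ t i, z t i ≠ 0 := by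
    by_contra! h
    exact hz (funext fun t => funext (h t))
  calc 0 < |z t i| := abs_pos.mpr hi
    _ ≤ l1 (z t) := Finset.single_le_sum (fun j _ => abs_nonneg (z t j)) (Finset.mem_univ i)
    _ ≤ normT z := l1_le_normT z t

lemma normT_lt_of_forall_l1_lt [Nonempty (Fin T)] {z : Fin T → Fin n → ℝ} {M : ℝ}
    (h : ∀ t, l1 (z t) < M) : normT z < M := by
  obtain ⟨t, ht⟩ := exists_eq_ciSup_of_finite (f := fun t => l1 (z t))
  rw [normT, ← ht]
  exact h t

end BlockNorm

lemma l1_DApply_le {n T : ℕ} (A : Matrix (Fin n) (Fin n) ℝ) (z : Fin T → Fin n → ℝ)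
    (r : Fin T) :
    l1 (DApply A z r) ≤ (l1 (A *ᵥ z ⟨0, r.pos⟩) + r * normT z) / (r + 1) := by
  have hr : (0 : ℝ) < r + 1 := by positivity
  calc l1 (DApply A z r)
      ≤ 1 / (r + 1) * l1 (A *ᵥ z ⟨0, r.pos⟩) + r / (r + 1) * normT z := by
        refine (l1_add_le _ _).trans ?_
        rw [l1_smul, l1_smul, abs_of_pos (by positivity), abs_of_nonneg (by positivity)]
        gcongr
        exact l1_le_normT z _
    _ = (l1 (A *ᵥ z ⟨0, r.pos⟩) + r * normT z) / (r + 1) := by field_simp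

lemma normT_DApply_lt {n T : ℕ} {A : Matrix (Fin n) (Fin n) ℝ} {z : Fin T → Fin n → ℝ}
    (hz : z ≠ 0) (hA : ∀ t, l1 (A *ᵥ z t) < normT z) : normT (DApply A z) < normT z := by
  have : Nonempty (Fin T) := by
    by_contra! hT
    exact hz (funext fun t => (hT.false t).elim)
  refine normT_lt_of_forall_l1_lt fun r => (l1_DApply_le A z r).trans_lt ?_
  have hr : (0 : ℝ) < r + 1 := by positivity
  rw [div_lt_iff₀ hr]
  linarith [hA ⟨0, r.pos⟩]

lemma Bmat_mulVec_of_sum_eq_zero {n : ℕ} (β : ℝ) {v : Fin n → ℝ} (hv : ∑ i, v i = 0) :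
    Bmat n β *ᵥ v = β • v := by
  ext i
  rw [Bmat, add_mulVec, smul_mulVec, smul_mulVec, one_mulVec]
  simp only [Pi.add_apply, Pi.smul_apply, smul_eq_mul, mulVec, dotProduct, of_apply, one_mul, hv,
    mul_zero, add_zero]

theorem D_backoff_strict_contraction_general
    (n T : ℕ)
    (β : ℝ) (hβ0 : 0 < β) (hβ1 : β < 1)
    (z : Fin T → Fin n → ℝ)
    (hzW : ∀ t, ∑ i, z t i = 0) (hz0 : z ≠ 0) :
    normT (DApply (Bmat n β) z) < normT z := by
  refine normT_DApply_lt hz0 fun t => ?_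
  rw [Bmat_mulVec_of_sum_eq_zero β (hzW t), l1_smul]
  calc |β| * l1 (z t) ≤ |β| * normT z := by gcongr; exact l1_le_normT z t
    _ < normT z := mul_lt_of_lt_one_left (normT_pos hz0) (abs_lt.mpr ⟨by linarith, hβ1⟩)

/-- For the full back-off AIMD matrix `B = β·I + ((1−β)/n)·e·eᵀ` with `0 < β < 1`,
and every nonzero `z ∈ W_T`, the strict contraction `‖D(B)z‖_T < ‖z‖_T` holds. -/
theorem D_backoff_strict_contraction
    (n T : ℕ) (hn : 0 < n) (hT : 0 < T)
    (β : ℝ) (hβ0 : 0 < β) (hβ1 : β < 1)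
    (z : Fin T → Fin n → ℝ)
    (hzW : ∀ t, ∑ i, z t i = 0) (hz0 : z ≠ 0) :
    normT (DApply (Bmat n β) z) < normT z :=
  D_backoff_strict_contraction_general n T β hβ0 hβ1 z hzW hz0
end

section
/- For every entrywise nonnegative column stochastic n×n matrix A, every k ∈ ℕ, and every z ∈ W_T, the iterated non-expansive property ‖D(A)^{k+1} z‖_T ≤ ‖z‖_T holds. -/
lemma l1_nonneg {n : ℕ} (v : Fin n → ℝ) : 0 ≤ l1 v :=
  Finset.sum_nonneg fun i _ => abs_nonneg _

lemma l1_mulVec_le {n : ℕ} (A : Matrix (Fin n) (Fin n) ℝ)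
    (hA0 : ∀ i j, 0 ≤ A i j) (hA1 : ∀ j, ∑ i, A i j = 1)
    (v : Fin n → ℝ) : l1 (A.mulVec v) ≤ l1 v := by
  unfold l1
  have key : ∀ i, |A.mulVec v i| ≤ ∑ j, A i j * |v j| := by
    intro i
    rw [Matrix.mulVec, dotProduct]
    refine (Finset.abs_sum_le_sum_abs _ _).trans ?_
    refine Finset.sum_le_sum fun j _ => ?_
    rw [abs_mul, abs_of_nonneg (hA0 i j)]
  calc ∑ i, |A.mulVec v i|
      ≤ ∑ i, ∑ j, A i j * |v j| := Finset.sum_le_sum fun i _ => key i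
    _ = ∑ j, (∑ i, A i j) * |v j| := by
        rw [Finset.sum_comm]; simp [Finset.sum_mul]
    _ = ∑ j, |v j| := by simp [hA1]

lemma l1_combo_le {n : ℕ} (a b : ℝ) (ha : 0 ≤ a) (hb : 0 ≤ b)
    (u v : Fin n → ℝ) : l1 (a • u + b • v) ≤ a * l1 u + b * l1 v := by
  unfold l1
  rw [Finset.mul_sum, Finset.mul_sum, ← Finset.sum_add_distrib]
  refine Finset.sum_le_sum fun i _ => ?_
  simp only [Pi.add_apply, Pi.smul_apply, smul_eq_mul]
  calc |a * u i + b * v i| ≤ |a * u i| + |b * v i| := abs_add_le _ _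
    _ = a * |u i| + b * |v i| := by
        rw [abs_mul, abs_mul, abs_of_nonneg ha, abs_of_nonneg hb]

lemma le_normT {n T : ℕ} (z : Fin T → Fin n → ℝ) (ℓ : Fin T) :
    l1 (z ℓ) ≤ normT z := by
  unfold normT
  exact le_ciSup (Set.Finite.bddAbove (Set.finite_range fun ℓ => l1 (z ℓ))) ℓ

lemma DApply_nonexpansive {n T : ℕ} (hT : 0 < T)
    (A : Matrix (Fin n) (Fin n) ℝ)
    (hA0 : ∀ i j, 0 ≤ A i j) (hA1 : ∀ j, ∑ i, A i j = 1)
    (z : Fin T → Fin n → ℝ) : normT (DApply A z) ≤ normT z := by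
  haveI : Nonempty (Fin T) := ⟨⟨0, hT⟩⟩
  unfold normT
  refine ciSup_le fun r => ?_
  have hr1 : (0:ℝ) < (r : ℕ) + 1 := by positivity
  have ha : (0:ℝ) ≤ 1 / ((r : ℕ) + 1) := by positivity
  have hb : (0:ℝ) ≤ ((r : ℕ) : ℝ) / ((r : ℕ) + 1) := by positivity
  calc l1 (DApply A z r)
      ≤ (1 / ((r : ℕ) + 1)) * l1 (A.mulVec (z ⟨0, r.pos⟩))
        + (((r : ℕ) : ℝ) / ((r : ℕ) + 1)) *
          l1 (z ⟨(r : ℕ) - 1, lt_of_le_of_lt (Nat.pred_le _) r.isLt⟩) :=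
        l1_combo_le _ _ ha hb _ _
    _ ≤ (1 / ((r : ℕ) + 1)) * normT z
        + (((r : ℕ) : ℝ) / ((r : ℕ) + 1)) * normT z := by
        gcongr
        exact (l1_mulVec_le A hA0 hA1 _).trans (le_normT z _)
        exact le_normT z _
    _ = normT z := by field_simp; ring

/-- For every entrywise nonnegative column stochastic matrix `A`, every `k ∈ ℕ`, and
every `z ∈ W_T`, the iterated non-expansive property `‖D(A)^{k+1} z‖_T ≤ ‖z‖_T` holds. -/
theorem D_pow_nonexpansive
    (n T : ℕ) (hn : 0 < n) (hT : 0 < T)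
    (A : Matrix (Fin n) (Fin n) ℝ)
    (hA0 : ∀ i j, 0 ≤ A i j) (hA1 : ∀ j, ∑ i, A i j = 1)
    (k : ℕ)
    (z : Fin T → Fin n → ℝ) (hzW : ∀ t, ∑ i, z t i = 0) :
    normT ((DApply A)^[k + 1] z) ≤ normT z := by
  induction k with
  | zero => simpa using DApply_nonexpansive hT A hA0 hA1 z
  | succ m ih =>
      rw [Function.iterate_succ_apply']
      exact (DApply_nonexpansive hT A hA0 hA1 _).trans ih
end
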